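/- arXiv:1903.07418 — 2 statements merged into one kernel-verified Lean document; each statement's English description precedes it below -/
import Mathlib

section
/- Let k ≥ 2 and let G be a simple graph on n vertices with girth at least 2k+1. Then Σ_{v ∈ V} d_1(v)·d_{k-1}(v) ≤ n². -/
/-!
Count the triples `(v, u, w)` with `u ∼ v` and `d(v, w) = k - 1`. Since the girth exceeds `2k`,
geodesics of length at most `k` are unique and no edge has both ends at the same distance
`≤ k - 1` from `w`; so `d(u, w)` is `k` or `k - 2`. In the first case `v` is the unique neighbour
of `u` on its geodesic to `w`, in the second `u` is the unique neighbour of `v` on its geodesic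
to `w`. Hence `(v, u, w) ↦ (u, w)`, resp. `(w, v)`, is injective into `V × V`.
-/

open SimpleGraph Finset

/-- `distCount G v i` is the number of vertices at hop-distance exactly `i` from `v`. -/
noncomputable def distCount {V : Type*} (G : SimpleGraph V) (v : V) (i : ℕ) : ℕ :=
  Set.ncard {w : V | G.Reachable v w ∧ G.dist v w = i}

namespace SimpleGraph

variable {V : Type*} {G : SimpleGraph V}

theorem Walk.IsPath.eq_of_length_add_length_lt_egirth {u v : V} {p q : G.Walk u v}
    (hp : p.IsPath) (hq : q.IsPath) (h : ↑(p.length + q.length) < G.egirth) : p = q := by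
  by_contra hne
  obtain ⟨_, _, p', q', hp', hq', hc⟩ := hp.exists_isCycle_of_ne hq hne
  have hcycle := egirth_le_length hc
  rw [Walk.length_append, Walk.length_reverse] at hcycle
  have hlen : p'.length + q'.length ≤ p.length + q.length :=
    add_le_add (Walk.length_le_of_isSubwalk hp') (Walk.length_le_of_isSubwalk hq')
  exact lt_irrefl _ (hcycle.trans_lt (lt_of_le_of_lt (by exact_mod_cast hlen) h))

theorem Walk.isPath_cons_of_dist_le {x y w : V} (h : G.Adj x y) (p : G.Walk y w)
    (hp : p.length = G.dist y w) (hd : G.dist y w ≤ G.dist x w) : (Walk.cons h p).IsPath := by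
  classical
  refine (Walk.cons_isPath_iff h p).2 ⟨p.isPath_of_length_eq_dist hp, fun hx => ?_⟩
  have hshort := Walk.length_dropUntil_lt_length hx h.ne
  have := G.dist_le (p.dropUntil x hx)
  omega

theorem eq_of_adj_of_dist_lt_dist {x y₁ y₂ w : V} (h₁ : G.Adj x y₁) (h₂ : G.Adj x y₂)
    (hd₁ : G.dist y₁ w < G.dist x w) (hd₂ : G.dist y₂ w < G.dist x w)
    (hg : ↑(2 * G.dist x w) < G.egirth) : y₁ = y₂ := by
  have hx : G.Reachable x w := Reachable.of_dist_ne_zero (by omega)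
  obtain ⟨p₁, hp₁⟩ := (h₁.symm.reachable.trans hx).exists_walk_length_eq_dist
  obtain ⟨p₂, hp₂⟩ := (h₂.symm.reachable.trans hx).exists_walk_length_eq_dist
  have heq : Walk.cons h₁ p₁ = Walk.cons h₂ p₂ :=
    (Walk.isPath_cons_of_dist_le h₁ p₁ hp₁ hd₁.le).eq_of_length_add_length_lt_egirth
      (Walk.isPath_cons_of_dist_le h₂ p₂ hp₂ hd₂.le)
      (lt_of_le_of_lt (by simp only [Walk.length_cons]; norm_cast; omega) hg)
  simpa using congrArg Walk.snd heq

theorem Adj.dist_le_dist_add_one {u v : V} (h : G.Adj u v) (w : V) :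
    G.dist u w ≤ G.dist v w + 1 := by
  rw [SimpleGraph.dist_comm, SimpleGraph.dist_comm (u := v)]
  rcases h.diff_dist_adj (u := w) with h' | h' | h' <;> omega

theorem Adj.dist_ne_dist {u v w : V} (h : G.Adj u v) (hr : G.Reachable v w)
    (hg : ↑(2 * G.dist v w + 1) < G.egirth) : G.dist u w ≠ G.dist v w := by
  intro heq
  obtain ⟨p, hp⟩ := hr.exists_walk_length_eq_dist
  obtain ⟨q, hq⟩ := (h.reachable.trans hr).exists_walk_length_eq_dist
  have hpq : Walk.cons h p = q :=
    (Walk.isPath_cons_of_dist_le h p hp heq.ge).eq_of_length_add_length_lt_egirth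
      (q.isPath_of_length_eq_dist hq)
      (lt_of_le_of_lt (by simp only [Walk.length_cons]; norm_cast; omega) hg)
  have := congrArg Walk.length hpq
  simp only [Walk.length_cons] at this
  omega

end SimpleGraph

theorem distCount_eq_card_filter {V : Type*} [Fintype V] (G : SimpleGraph V)
    [DecidableRel G.Reachable] (v : V) (i : ℕ) :
    distCount G v i = #{w | G.Reachable v w ∧ G.dist v w = i} := by
  rw [distCount, ← Set.ncard_coe_finset, coe_filter]
  simp

theorem sum_degree_mul_distCount_le {V : Type*} [Fintype V] (G : SimpleGraph V)
    [DecidableRel G.Adj] {m : ℕ} (hg : (2 * m + 3 : ℕ∞) ≤ G.egirth) :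
    ∑ v, G.degree v * distCount G v m ≤ Fintype.card V ^ 2 := by
  classical
  have hlt : ∀ d : ℕ, d < 2 * m + 3 → (d : ℕ∞) < G.egirth := fun d hd =>
    lt_of_lt_of_le (by exact_mod_cast hd) hg
  set sphere : V → Finset V := fun v => {w | G.Reachable v w ∧ G.dist v w = m}
  set triples := univ.sigma fun v => G.neighborFinset v ×ˢ sphere v
  let f : (Σ _ : V, V × V) → V × V := fun ⟨v, u, w⟩ =>
    if m < G.dist u w then (u, w) else (w, v)
  have hf : Set.InjOn f triples := by
    rintro ⟨v₁, u₁, w₁⟩ h₁ ⟨v₂, u₂, w₂⟩ h₂ heq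
    simp only [triples, sphere, mem_coe, mem_sigma, mem_univ, true_and, mem_product,
      mem_neighborFinset, mem_filter] at h₁ h₂
    obtain ⟨e₁, r₁, d₁⟩ := h₁
    obtain ⟨e₂, r₂, d₂⟩ := h₂
    have ne₁ := e₁.symm.dist_ne_dist r₁ (hlt _ (by omega))
    have ne₂ := e₂.symm.dist_ne_dist r₂ (hlt _ (by omega))
    have le₁ := e₁.symm.dist_le_dist_add_one w₁
    have le₂ := e₂.symm.dist_le_dist_add_one w₂
    simp only [f] at heq
    split_ifs at heq with far₁ far₂ far₂ <;> simp only [Prod.mk.injEq] at heq <;>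
      obtain ⟨rfl, rfl⟩ := heq
    · obtain rfl := eq_of_adj_of_dist_lt_dist (w := w₁) e₁.symm e₂.symm (by omega) (by omega)
        (hlt _ (by omega))
      rfl
    · rw [SimpleGraph.dist_comm] at d₂; omega
    · rw [SimpleGraph.dist_comm] at d₁; omega
    · obtain rfl := eq_of_adj_of_dist_lt_dist (w := w₁) e₁ e₂ (by omega) (by omega)
        (hlt _ (by omega))
      rfl
  calc ∑ v, G.degree v * distCount G v m = #triples := by
        simp only [triples, sphere, card_sigma, card_product, card_neighborFinset_eq_degree,
          distCount_eq_card_filter]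
    _ ≤ #(univ : Finset (V × V)) := card_le_card_of_injOn f (fun _ _ => mem_univ _) hf
    _ = Fintype.card V ^ 2 := by rw [card_univ, Fintype.card_prod, sq]

theorem stmt10_general {V : Type*} [Fintype V] (G : SimpleGraph V)
    [DecidableRel G.Adj] (k : ℕ) (hg : (2 * k + 1 : ℕ∞) ≤ G.girth) :
    ∑ v : V, G.degree v * distCount G v (k - 1) ≤ (Fintype.card V) ^ 2 := by
  refine sum_degree_mul_distCount_le G ?_
  rcases k with _ | k
  · exact three_le_egirth
  · rw [Nat.add_sub_cancel]
    calc (2 * k + 3 : ℕ∞) = 2 * (k + 1 : ℕ) + 1 := by push_cast; ring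
      _ ≤ G.girth := hg
      _ ≤ G.egirth := ENat.natCast_toNat_le_self _

theorem stmt10 {V : Type*} [Fintype V] [DecidableEq V] (G : SimpleGraph V)
    [DecidableRel G.Adj] (k : ℕ) (hk : 2 ≤ k) (hg : (2 * k + 1 : ℕ∞) ≤ G.girth) :
    ∑ v : V, G.degree v * distCount G v (k - 1) ≤ (Fintype.card V) ^ 2 :=
  stmt10_general G k hg
end

section
/- Let k ≥ 2, p = k/(k-1), and let G be a simple graph on n vertices with girth at least 2k+1. Let V_med = {v : n^((k-2)/(k-1))·d_1(v)^(1/(k-1)) ≤ d_{k-1}(v)}. Then (Σ_{v ∈ V_med} d_1(v)^p)^(1/p) ≤ n. -/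
/-!
Put `m = k - 1`, so that every cycle has length at least `2m + 3`. Fix `u` and let `Sᵢ` be the
sphere of radius `i` around `u`. Two distinct geodesics into a vertex of `Sⱼ`, `j ≤ m + 1`, would
close a cycle of length at most `2m + 2`; hence a vertex of `Sₘ` has at most one neighbour in
`Sₘ₋₁ ∪ Sₘ`, a vertex of `Sₘ₊₁` has exactly one neighbour in `Sₘ`, and `∑_{v ∈ Sₘ} deg v ≤ |Sₘ| +
|Sₘ₊₁| ≤ n`. Summing over `u` and exchanging the sums gives `∑_v deg v · d_m(v) ≤ n²`. On `V_med`,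
`deg v ^ p = deg v · deg v ^ (1/(k-1)) ≤ deg v · d_m(v) / n^((k-2)/(k-1))`, so the `p`-th power of
the left-hand side is at most `n² / n^((k-2)/(k-1)) = n^p`.
-/

open SimpleGraph Finset

namespace SimpleGraph

variable {V : Type*} {G : SimpleGraph V}

lemma Walk.IsSubwalk.length_le {u₁ v₁ u₂ v₂ : V} {p : G.Walk u₁ v₁} {q : G.Walk u₂ v₂}
    (h : p.IsSubwalk q) : p.length ≤ q.length := by
  obtain ⟨r, r', rfl⟩ := h
  simp only [Walk.length_append]
  omega

lemma egirth_le_length_add_length {u v : V} {p q : G.Walk u v} (hp : p.IsPath) (hq : q.IsPath)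
    (hne : p ≠ q) : G.egirth ≤ p.length + q.length := by
  obtain ⟨_, _, p', q', hp', hq', hcyc⟩ := hp.exists_isCycle_of_ne hq hne
  calc G.egirth ≤ (p'.append q'.reverse).length := egirth_le_length hcyc
    _ ≤ p.length + q.length := by
      simp only [Walk.length_append, Walk.length_reverse]
      exact_mod_cast Nat.add_le_add hp'.length_le hq'.length_le

lemma Walk.notMem_support_of_length_eq_dist {u x z : V} {p : G.Walk u x}
    (hp : p.length = G.dist u x) (hz : G.dist u x ≤ G.dist u z) (hzx : z ≠ x) :
    z ∉ p.support := by
  classical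
  intro hmem
  have := (dist_le (p.takeUntil z hmem)).trans_lt (p.length_takeUntil_lt_length hmem hzx)
  omega

lemma exists_isPath_concat_of_dist_le {u x z : V} (hr : G.Reachable u x) (h : G.Adj x z)
    (hz : G.dist u x ≤ G.dist u z) :
    ∃ p : G.Walk u x, (p.concat h).IsPath ∧ p.length = G.dist u x := by
  obtain ⟨p, hp, hlen⟩ := hr.exists_path_of_dist
  exact ⟨p, hp.concat (Walk.notMem_support_of_length_eq_dist hlen hz h.ne') h, hlen⟩

lemma egirth_le_dist_add_dist_of_adj {u x₁ x₂ z : V} (hr : G.Reachable u z)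
    (h₁ : G.Adj x₁ z) (h₂ : G.Adj x₂ z) (hne : x₁ ≠ x₂)
    (hz₁ : G.dist u x₁ ≤ G.dist u z) (hz₂ : G.dist u x₂ ≤ G.dist u z) :
    G.egirth ≤ G.dist u x₁ + G.dist u x₂ + 2 := by
  obtain ⟨p₁, hp₁, hl₁⟩ := exists_isPath_concat_of_dist_le (hr.trans h₁.symm.reachable) h₁ hz₁
  obtain ⟨p₂, hp₂, hl₂⟩ := exists_isPath_concat_of_dist_le (hr.trans h₂.symm.reachable) h₂ hz₂
  have hne' : p₁.concat h₁ ≠ p₂.concat h₂ := fun he => hne (Walk.concat_inj he).1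
  have := egirth_le_length_add_length hp₁ hp₂ hne'
  simp only [Walk.length_concat, hl₁, hl₂] at this
  convert this using 1
  push_cast
  ring

section Sphere

variable [Fintype V]

noncomputable def sphereFinset (G : SimpleGraph V) (u : V) (m : ℕ) : Finset V :=
  (Set.toFinite {v | G.Reachable u v ∧ G.dist u v = m}).toFinset

lemma mem_sphereFinset {u v : V} {m : ℕ} :
    v ∈ G.sphereFinset u m ↔ G.Reachable u v ∧ G.dist u v = m :=
  Set.Finite.mem_toFinset _

lemma card_sphereFinset (u : V) (m : ℕ) : #(G.sphereFinset u m) = distCount G u m :=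
  (Set.ncard_eq_toFinset_card _ _).symm

lemma mem_sphereFinset_comm {u v : V} {m : ℕ} :
    v ∈ G.sphereFinset u m ↔ u ∈ G.sphereFinset v m := by
  rw [mem_sphereFinset, mem_sphereFinset, reachable_comm, dist_comm]

theorem sum_degree_sphereFinset_le [DecidableRel G.Adj] {m : ℕ}
    (hg : (2 * m + 3 : ℕ∞) ≤ G.egirth) (u : V) :
    ∑ v ∈ G.sphereFinset u m, G.degree v ≤ Fintype.card V := by
  classical
  have parent_unique {x₁ x₂ z : V} (hr : G.Reachable u z) (h₁ : G.Adj x₁ z) (h₂ : G.Adj x₂ z)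
      (hz₁ : G.dist u x₁ ≤ G.dist u z) (hz₂ : G.dist u x₂ ≤ G.dist u z)
      (hm₁ : G.dist u x₁ ≤ m) (hm₂ : G.dist u x₂ ≤ m) : x₁ = x₂ := by
    by_contra hne
    have h := hg.trans (egirth_le_dist_add_dist_of_adj hr h₁ h₂ hne hz₁ hz₂)
    norm_cast at h
    omega
  -- An edge `vw` with `v` on the sphere is charged to `w` if `w` lies one level further out,
  -- and to `v` otherwise.
  let f : (Σ _ : V, V) → V := fun e => if G.dist u e.2 = m + 1 then e.2 else e.1
  have hf : Set.InjOn f (G.sphereFinset u m |>.sigma fun v => G.neighborFinset v) := by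
    rintro ⟨v, w⟩ hvw ⟨v', w'⟩ hvw' heq
    simp only [coe_sigma, Set.mem_sigma_iff, mem_coe, mem_sphereFinset,
      mem_neighborFinset] at hvw hvw'
    obtain ⟨⟨hr, hd⟩, hadj⟩ := hvw
    obtain ⟨⟨hr', hd'⟩, hadj'⟩ := hvw'
    have hdw := hadj.diff_dist_adj (u := u)
    have hdw' := hadj'.diff_dist_adj (u := u)
    simp only [f] at heq
    split_ifs at heq with hout hout' hout'
    · subst heq
      obtain rfl : v = v' := parent_unique (hr.trans hadj.reachable) hadj hadj'
        (by omega) (by omega) (by omega) (by omega)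
      rfl
    · subst heq; omega
    · subst heq; omega
    · subst heq
      obtain rfl : w = w' := parent_unique hr hadj.symm hadj'.symm
        (by omega) (by omega) (by omega) (by omega)
      rfl
  calc ∑ v ∈ G.sphereFinset u m, G.degree v
        = #(G.sphereFinset u m |>.sigma fun v => G.neighborFinset v) := by
        simp only [card_sigma, card_neighborFinset_eq_degree]
    _ ≤ #(univ : Finset V) := card_le_card_of_injOn f (fun _ _ => mem_coe.2 (mem_univ _)) hf
    _ = Fintype.card V := card_univ

theorem sum_degree_mul_distCount_le [DecidableRel G.Adj] {m : ℕ}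
    (hg : (2 * m + 3 : ℕ∞) ≤ G.egirth) :
    ∑ v, G.degree v * distCount G v m ≤ Fintype.card V * Fintype.card V :=
  calc ∑ v, G.degree v * distCount G v m = ∑ v, ∑ _w ∈ G.sphereFinset v m, G.degree v := by
        simp only [sum_const, card_sphereFinset, smul_eq_mul, mul_comm]
    _ = ∑ w, ∑ v ∈ G.sphereFinset w m, G.degree v :=
        sum_comm' fun v w => by simp only [mem_univ, true_and, and_true, mem_sphereFinset_comm]
    _ ≤ ∑ _w : V, Fintype.card V := sum_le_sum fun w _ => sum_degree_sphereFinset_le hg w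
    _ = Fintype.card V * Fintype.card V := by rw [sum_const, card_univ, smul_eq_mul]

end Sphere

end SimpleGraph

lemma Finset.sum_rpow_one_add_le {ι : Type*} {s : Finset ι} {a b : ι → ℝ} {c q : ℝ}
    (hc : 0 < c) (hq : 0 ≤ q) (ha : ∀ i ∈ s, 0 ≤ a i) (hab : ∀ i ∈ s, c * a i ^ q ≤ b i) :
    ∑ i ∈ s, a i ^ (1 + q) ≤ (∑ i ∈ s, a i * b i) / c := by
  rw [sum_div]
  refine sum_le_sum fun i hi => ?_
  rw [Real.rpow_add' (ha i hi) (by linarith), Real.rpow_one, le_div_iff₀ hc, mul_assoc,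
    mul_comm _ c]
  exact mul_le_mul_of_nonneg_left (hab i hi) (ha i hi)

theorem stmt11_general {V : Type*} [Fintype V] (G : SimpleGraph V)
    [DecidableRel G.Adj] (k : ℕ) (hk : 2 ≤ k) (p : ℝ)
    (hp : p = (k : ℝ) / ((k : ℝ) - 1)) (hg : (2 * k + 1 : ℕ∞) ≤ G.girth) :
    (∑ v ∈ Finset.univ.filter
        (fun v => (Fintype.card V : ℝ) ^ (((k : ℝ) - 2) / ((k : ℝ) - 1)) *
            (G.degree v : ℝ) ^ ((1 : ℝ) / ((k : ℝ) - 1)) ≤ (distCount G v (k - 1) : ℝ)),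
        (G.degree v : ℝ) ^ p) ^ (1 / p) ≤ (Fintype.card V : ℝ) := by
  set n := Fintype.card V
  have hk' : (2 : ℝ) ≤ k := by exact_mod_cast hk
  have hk1 : (0 : ℝ) < k - 1 := by linarith
  have hp_pos : 0 < p := by rw [hp]; exact div_pos (by linarith) hk1
  rcases isEmpty_or_nonempty V with _ | _
  · simp [n, Real.zero_rpow, hp_pos.ne']
  have hn : (0 : ℝ) < n := by exact_mod_cast Fintype.card_pos
  have hegirth : (2 * (k - 1) + 3 : ℕ∞) ≤ G.egirth := by
    have h : ((2 * (k - 1) + 3 : ℕ) : ℕ∞) = 2 * k + 1 := by norm_cast; omega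
    exact_mod_cast h ▸ hg.trans G.egirth.natCast_toNat_le_self
  have hp_eq : p = 1 + 1 / ((k : ℝ) - 1) := by rw [hp]; field_simp [hk1.ne']; ring
  have hn_sq : (n : ℝ) * n / n ^ (((k : ℝ) - 2) / ((k : ℝ) - 1)) = n ^ p := by
    rw [← sq, ← Real.rpow_two, ← Real.rpow_sub hn, hp]
    congr 1
    field_simp [hk1.ne']
    ring
  rw [one_div p, Real.rpow_inv_le_iff_of_pos (by positivity) hn.le hp_pos]
  calc _ ≤ (∑ v ∈ _, (G.degree v : ℝ) * distCount G v (k - 1)) /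
        n ^ (((k : ℝ) - 2) / ((k : ℝ) - 1)) := by
        rw [hp_eq]
        exact sum_rpow_one_add_le (by positivity) (by positivity) (fun _ _ => by positivity)
          fun v hv => (mem_filter.1 hv).2
    _ ≤ (∑ v, (G.degree v : ℝ) * distCount G v (k - 1)) / n ^ (((k : ℝ) - 2) / ((k : ℝ) - 1)) := by
        gcongr
        exact subset_univ _
    _ ≤ (n : ℝ) * n / n ^ (((k : ℝ) - 2) / ((k : ℝ) - 1)) := by
        gcongr
        exact_mod_cast sum_degree_mul_distCount_le hegirth
    _ = n ^ p := hn_sq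

theorem stmt11 {V : Type*} [Fintype V] [DecidableEq V] (G : SimpleGraph V)
    [DecidableRel G.Adj] (k : ℕ) (hk : 2 ≤ k) (p : ℝ)
    (hp : p = (k : ℝ) / ((k : ℝ) - 1)) (hg : (2 * k + 1 : ℕ∞) ≤ G.girth) :
    (∑ v ∈ Finset.univ.filter
        (fun v => (Fintype.card V : ℝ) ^ (((k : ℝ) - 2) / ((k : ℝ) - 1)) *
            (G.degree v : ℝ) ^ ((1 : ℝ) / ((k : ℝ) - 1)) ≤ (distCount G v (k - 1) : ℝ)),
        (G.degree v : ℝ) ^ p) ^ (1 / p) ≤ (Fintype.card V : ℝ) :=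
  stmt11_general G k hk p hp hg
end
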